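/- arXiv:1607.02847 — 2 statements merged into one kernel-verified Lean document; each statement's English description precedes it below -/
import Mathlib

section
/- Let C be a unital C*-algebra, ω a state on C, and u ∈ C a partial isometry with p := u u* and q := u* u. Then ‖ω(· u*) − ω(· q)‖² ≤ 4 (ω(p) + ω(q) − ω(u) − ω(u*)), where the norm is the dual norm on the space of bounded linear functionals on C. -/
/-!
Put `a := u* (1 - u) = u* - q`, so that the functional in question is `x ↦ ω (x a)`, and
`a* a = p + q - u - u*` because `u` is a partial isometry. Cauchy–Schwarz for the GNS semi-inner
product `⟪x, y⟫ = ω (x* y)` gives `|ω (x a)|² ≤ ω (x x*) ω (a* a) ≤ ‖x‖² ω (a* a)`, so the squared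
norm is bounded even by `ω (p) + ω (q) - ω (u) - ω (u*)` itself.
-/

open scoped ComplexOrder

namespace PositiveLinearMap

section StarOrderedRing

variable {R A E : Type*} [Semiring R] [NonUnitalRing A] [PartialOrder A] [StarRing A]
  [StarOrderedRing A] [Module R A] [AddCommGroup E] [PartialOrder E] [IsOrderedAddMonoid E]
  [Module R E]

theorem map_nonneg_of_map_star_mul_self_nonneg (f : A →ₗ[R] E)
    (hf : ∀ x, 0 ≤ f (star x * x)) {a : A} (ha : 0 ≤ a) : 0 ≤ f a := by
  rw [StarOrderedRing.nonneg_iff] at ha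
  induction ha using AddSubmonoid.closure_induction with
  | mem x hx => obtain ⟨s, rfl⟩ := hx; exact hf s
  | zero => simp
  | add x y _ _ hx hy => rw [map_add]; exact add_nonneg hx hy

def ofMapStarMulSelfNonneg (f : A →ₗ[R] E) (hf : ∀ x, 0 ≤ f (star x * x)) : A →ₚ[R] E :=
  mk₀ f fun _ ↦ map_nonneg_of_map_star_mul_self_nonneg f hf

end StarOrderedRing

section NonUnitalCStarAlgebra

variable {A : Type*} [NonUnitalCStarAlgebra A] [PartialOrder A] [StarOrderedRing A]

theorem norm_apply_mul_le (f : A →ₚ[ℂ] ℂ) (x y : A) :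
    ‖f (x * y)‖ ≤ ‖f.toPreGNS (star x)‖ * ‖f.toPreGNS y‖ := by
  simpa [preGNS_inner_def] using norm_inner_le_norm (𝕜 := ℂ) (f.toPreGNS (star x)) (f.toPreGNS y)

theorem norm_toPreGNS_sq (f : A →ₚ[ℂ] ℂ) (x : A) :
    ‖f.toPreGNS x‖ ^ 2 = (f (star x * x)).re := by
  simpa [← Complex.ofReal_pow] using congrArg Complex.re (f.preGNS_norm_sq (f.toPreGNS x))

end NonUnitalCStarAlgebra

section CStarAlgebra

variable {A : Type*} [CStarAlgebra A] [PartialOrder A] [StarOrderedRing A]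

theorem norm_toPreGNS_star_sq_le (f : A →ₚ[ℂ] ℂ) (x : A) :
    ‖f.toPreGNS (star x)‖ ^ 2 ≤ ‖f 1‖ * ‖x‖ ^ 2 :=
  calc ‖f.toPreGNS (star x)‖ ^ 2 = (f (x * star x)).re := by
        rw [norm_toPreGNS_sq, star_star]
    _ ≤ ‖f (x * star x)‖ := Complex.re_le_norm _
    _ ≤ ‖f 1‖ * ‖x * star x‖ := f.norm_apply_le_of_nonneg _ (mul_star_self_nonneg x)
    _ = ‖f 1‖ * ‖x‖ ^ 2 := by rw [CStarRing.norm_self_mul_star, sq]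

theorem norm_toPreGNS_star_le (f : A →ₚ[ℂ] ℂ) (x : A) :
    ‖f.toPreGNS (star x)‖ ≤ √‖f 1‖ * ‖x‖ := by
  rw [← Real.sqrt_sq (norm_nonneg x), ← Real.sqrt_mul (norm_nonneg _),
    Real.le_sqrt (norm_nonneg _) (by positivity)]
  exact f.norm_toPreGNS_star_sq_le x

end CStarAlgebra

end PositiveLinearMap

namespace ContinuousLinearMap

variable {A : Type*} [CStarAlgebra A] [PartialOrder A] [StarOrderedRing A]

theorem norm_comp_mulRight_sq_le (ω : A →L[ℂ] ℂ) (hω : ∀ x, 0 ≤ ω (star x * x)) (a : A) :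
    ‖ω.comp ((mul ℂ A).flip a)‖ ^ 2 ≤ ‖ω 1‖ * (ω (star a * a)).re := by
  set f := PositiveLinearMap.ofMapStarMulSelfNonneg ω.toLinearMap hω
  have hbound : ‖ω.comp ((mul ℂ A).flip a)‖ ≤ √‖f 1‖ * ‖f.toPreGNS a‖ := by
    refine opNorm_le_bound _ (by positivity) fun x ↦ ?_
    calc ‖ω (x * a)‖ = ‖f (x * a)‖ := rfl
      _ ≤ ‖f.toPreGNS (star x)‖ * ‖f.toPreGNS a‖ := f.norm_apply_mul_le x a
      _ ≤ √‖f 1‖ * ‖x‖ * ‖f.toPreGNS a‖ := by gcongr; exact f.norm_toPreGNS_star_le x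
      _ = √‖f 1‖ * ‖f.toPreGNS a‖ * ‖x‖ := mul_right_comm _ _ _
  calc ‖ω.comp ((mul ℂ A).flip a)‖ ^ 2 ≤ (√‖f 1‖ * ‖f.toPreGNS a‖) ^ 2 := by gcongr
    _ = ‖ω 1‖ * (ω (star a * a)).re := by
        rw [mul_pow, Real.sq_sqrt (norm_nonneg _), f.norm_toPreGNS_sq]; rfl

end ContinuousLinearMap

theorem star_mul_self_star_mul_one_sub {R : Type*} [Ring R] [StarRing R] {u : R}
    (hu : u * star u * u = u) :
    star (star u * (1 - u)) * (star u * (1 - u)) = u * star u + star u * u - u - star u := by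
  have hu' : star u * u * star u = star u := by simpa [mul_assoc] using congrArg star hu
  simp only [star_mul, star_sub, star_one, star_star]
  calc (1 - star u) * u * (star u * (1 - u))
      = u * star u - u * star u * u - star u * u * star u + star u * (u * star u * u) := by
        noncomm_ring
    _ = u * star u + star u * u - u - star u := by rw [hu, hu']; abel

/-- For a state `ω` on a unital C*-algebra `C` and a partial isometry `u` with `p = u u*`,
`q = u* u`, one has `‖ω(· u*) − ω(· q)‖² ≤ 4 (ω(p) + ω(q) − ω(u) − ω(u*))`. -/
theorem state_polar_inequality_right
    {C : Type*} [NormedRing C] [StarRing C] [CStarRing C] [NormedAlgebra ℂ C]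
    [CompleteSpace C] [StarModule ℂ C]
    (ω : C →L[ℂ] ℂ) (hω1 : ω 1 = 1) (hωpos : ∀ x : C, 0 ≤ ω (star x * x))
    (u : C) (hu : u * star u * u = u) :
    ‖ω.comp ((ContinuousLinearMap.mul ℂ C).flip (star u))
        - ω.comp ((ContinuousLinearMap.mul ℂ C).flip (star u * u))‖ ^ 2
      ≤ 4 * (ω (u * star u) + ω (star u * u) - ω u - ω (star u)).re := by
  let : CStarAlgebra C := {}
  let : PartialOrder C := CStarAlgebra.spectralOrder C
  let : StarOrderedRing C := CStarAlgebra.spectralOrderedRing C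
  set a := star u * (1 - u)
  have hsub : ω.comp ((ContinuousLinearMap.mul ℂ C).flip (star u))
      - ω.comp ((ContinuousLinearMap.mul ℂ C).flip (star u * u))
      = ω.comp ((ContinuousLinearMap.mul ℂ C).flip a) := by
    ext x; simp [a, mul_sub]
  have hdefect : ω (star a * a) = ω (u * star u) + ω (star u * u) - ω u - ω (star u) := by
    rw [star_mul_self_star_mul_one_sub hu, map_sub, map_sub, map_add]
  have hnonneg : 0 ≤ (ω (star a * a)).re := (Complex.nonneg_iff.mp (hωpos a)).1
  calc _ = ‖ω.comp ((ContinuousLinearMap.mul ℂ C).flip a)‖ ^ 2 := by rw [hsub]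
    _ ≤ ‖ω 1‖ * (ω (star a * a)).re := ω.norm_comp_mulRight_sq_le hωpos a
    _ ≤ 4 * (ω (star a * a)).re := by rw [hω1, norm_one]; linarith
    _ = _ := by rw [hdefect]
end

section
/- Let C be a unital C*-algebra, ω a state on C, and u ∈ C a partial isometry with p := u u* and q := u* u. Then ‖ω(u · u*) − ω(q · q)‖² ≤ 4 (ω(p) + ω(q) − ω(u) − ω(u*)). -/
/-!
With `q = u* u`, one has `u x u* - q x q = (u - q) x u* + q x (u - q)*`. By the Cauchy–Schwarz
inequality for the form `(a, b) ↦ ω (a* b)`, and since `‖u‖, ‖q‖ ≤ 1`, each summand is at most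
`‖x‖ · ω ((u - q) (u - q)*) ^ (1/2)` in modulus, and `(u - q) (u - q)* = p + q - u - u*`.
-/

open scoped ComplexOrder

section PartialIsometry

variable {R : Type*} [Ring R] [StarRing R] {u : R}

theorem isStarProjection_star_mul_self_of_mul_star_mul_self (hu : u * star u * u = u) :
    IsStarProjection (star u * u) where
  isIdempotentElem := by
    rw [IsIdempotentElem, show star u * u * (star u * u) = star u * (u * star u * u) by
      simp only [mul_assoc], hu]
  isSelfAdjoint := .star_mul_self u

theorem sub_star_mul_self_mul_star_of_mul_star_mul_self (hu : u * star u * u = u) :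
    (u - star u * u) * star (u - star u * u) = u * star u + star u * u - u - star u := by
  have hq := isStarProjection_star_mul_self_of_mul_star_mul_self hu
  have hright : u * (star u * u) = u := by rw [← mul_assoc, hu]
  have hleft : star u * u * star u = star u := by
    simpa only [star_mul, star_star, mul_assoc] using congrArg star hu
  rw [star_sub, hq.isSelfAdjoint.star_eq, sub_mul, mul_sub, mul_sub, hright, hleft,
    hq.isIdempotentElem.eq]
  abel

theorem norm_le_one_of_mul_star_mul_self {E : Type*} [NormedRing E] [StarRing E] [CStarRing E]
    {u : E} (hu : u * star u * u = u) : ‖u‖ ≤ 1 := by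
  have h := (isStarProjection_star_mul_self_of_mul_star_mul_self hu).norm_le
  rw [CStarRing.norm_star_mul_self] at h
  nlinarith [norm_nonneg u]

end PartialIsometry

theorem PositiveLinearMap.re_apply_nonneg {E : Type*} [AddCommMonoid E] [PartialOrder E]
    [Module ℂ E] (f : E →ₚ[ℂ] ℂ) {a : E} (ha : 0 ≤ a) : 0 ≤ (f a).re :=
  (Complex.nonneg_iff.mp (f.map_nonneg ha)).1

namespace PositiveLinearMap

variable {A : Type*} [CStarAlgebra A] [PartialOrder A] [StarOrderedRing A] (f : A →ₚ[ℂ] ℂ)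

theorem norm_apply_star_mul_sq_le (a b : A) :
    ‖f (star a * b)‖ ^ 2 ≤ (f (star a * a)).re * (f (star b * b)).re := by
  have hcs := norm_inner_le_norm (𝕜 := ℂ) (f.toPreGNS a) (f.toPreGNS b)
  rw [preGNS_inner_def, preGNS_norm_def, preGNS_norm_def] at hcs
  simp only [ofPreGNS_toPreGNS] at hcs
  have ha := f.re_apply_nonneg (star_mul_self_nonneg a)
  have hb := f.re_apply_nonneg (star_mul_self_nonneg b)
  calc ‖f (star a * b)‖ ^ 2 ≤ (√(f (star a * a)).re * √(f (star b * b)).re) ^ 2 := by gcongr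
    _ = _ := by rw [mul_pow, Real.sq_sqrt ha, Real.sq_sqrt hb]

theorem re_apply_star_mul_self_le (b : A) : (f (star b * b)).re ≤ ‖f 1‖ * ‖b‖ ^ 2 :=
  calc (f (star b * b)).re ≤ ‖f (star b * b)‖ := Complex.re_le_norm _
    _ ≤ ‖f 1‖ * ‖star b * b‖ := f.norm_apply_le_of_nonneg _ (star_mul_self_nonneg b)
    _ = ‖f 1‖ * ‖b‖ ^ 2 := by rw [CStarRing.norm_star_mul_self, sq]

theorem norm_apply_star_mul_le (a b : A) :
    ‖f (star a * b)‖ ≤ √((f (star a * a)).re * ‖f 1‖) * ‖b‖ := by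
  have ha := f.re_apply_nonneg (star_mul_self_nonneg a)
  rw [← Real.sqrt_sq (norm_nonneg b), ← Real.sqrt_mul (by positivity)]
  refine Real.le_sqrt_of_sq_le ((f.norm_apply_star_mul_sq_le a b).trans ?_)
  rw [mul_assoc]
  exact mul_le_mul_of_nonneg_left (f.re_apply_star_mul_self_le b) ha

theorem norm_apply_mul_star_comm (a b : A) : ‖f (a * star b)‖ = ‖f (b * star a)‖ := by
  rw [← norm_star, ← map_star, star_mul, star_star]

theorem norm_apply_conj_sub_apply_conj_le {u v : A} (hu : ‖u‖ ≤ 1) (hv : ‖v‖ ≤ 1) (x : A) :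
    ‖f (u * x * star u) - f (v * x * star v)‖
      ≤ 2 * √((f ((u - v) * star (u - v))).re * ‖f 1‖) * ‖x‖ := by
  set K := √((f ((u - v) * star (u - v))).re * ‖f 1‖)
  have hsplit : f (u * x * star u) - f (v * x * star v)
      = f (star (star (u - v)) * (x * star u)) + f (v * x * star (u - v)) := by
    rw [star_star, star_sub, ← map_sub, ← map_add]
    congr 1
    noncomm_ring
  have hleft : ‖f (star (star (u - v)) * (x * star u))‖ ≤ K * ‖x‖ := by
    refine (f.norm_apply_star_mul_le _ _).trans ?_
    rw [star_star]
    refine mul_le_mul_of_nonneg_left ?_ (Real.sqrt_nonneg _)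
    calc ‖x * star u‖ ≤ ‖x‖ * ‖star u‖ := norm_mul_le _ _
      _ ≤ ‖x‖ := by rw [norm_star]; exact mul_le_of_le_one_right (norm_nonneg x) hu
  have hright : ‖f (v * x * star (u - v))‖ ≤ K * ‖x‖ := by
    rw [norm_apply_mul_star_comm, ← star_star (u - v)]
    refine (f.norm_apply_star_mul_le _ _).trans ?_
    rw [star_star]
    refine mul_le_mul_of_nonneg_left ?_ (Real.sqrt_nonneg _)
    calc ‖star (v * x)‖ = ‖v * x‖ := norm_star _
      _ ≤ ‖v‖ * ‖x‖ := norm_mul_le _ _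
      _ ≤ ‖x‖ := mul_le_of_le_one_left (norm_nonneg x) hv
  calc _ ≤ ‖f (star (star (u - v)) * (x * star u))‖ + ‖f (v * x * star (u - v))‖ := by
        rw [hsplit]; exact norm_add_le _ _
    _ ≤ 2 * K * ‖x‖ := by linarith

end PositiveLinearMap

/-- For a state `ω` on a unital C*-algebra `C` and a partial isometry `u` with `p = u u*`,
`q = u* u`, one has `‖ω(u · u*) − ω(q · q)‖² ≤ 4 (ω(p) + ω(q) − ω(u) − ω(u*))`. -/
theorem state_polar_inequality_twosided
    {C : Type*} [NormedRing C] [StarRing C] [CStarRing C] [NormedAlgebra ℂ C]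
    [CompleteSpace C] [StarModule ℂ C]
    (ω : C →L[ℂ] ℂ) (hω1 : ω 1 = 1) (hωpos : ∀ x : C, 0 ≤ ω (star x * x))
    (u : C) (hu : u * star u * u = u) :
    ‖ω.comp (ContinuousLinearMap.mulLeftRight ℂ C u (star u))
        - ω.comp (ContinuousLinearMap.mulLeftRight ℂ C (star u * u) (star u * u))‖ ^ 2
      ≤ 4 * (ω (u * star u) + ω (star u * u) - ω u - ω (star u)).re := by
  let _ : CStarAlgebra C := { }
  let _ : PartialOrder C := CStarAlgebra.spectralOrder C
  have : StarOrderedRing C := CStarAlgebra.spectralOrderedRing C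
  let f : C →ₚ[ℂ] ℂ := .mk₀ ω.toLinearMap fun a ha => by
    obtain ⟨b, rfl⟩ := CStarAlgebra.nonneg_iff_eq_star_mul_self.mp ha
    exact hωpos b
  have hfω (a : C) : f a = ω a := rfl
  have hq := isStarProjection_star_mul_self_of_mul_star_mul_self hu
  set δ := (f ((u - star u * u) * star (u - star u * u))).re with hδ
  have hδ_nonneg : 0 ≤ δ := f.re_apply_nonneg (mul_star_self_nonneg _)
  have hnorm : ‖ω.comp (ContinuousLinearMap.mulLeftRight ℂ C u (star u))
      - ω.comp (ContinuousLinearMap.mulLeftRight ℂ C (star u * u) (star u * u))‖ ≤ 2 * √δ := by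
    refine ContinuousLinearMap.opNorm_le_bound _ (by positivity) fun x => ?_
    have h := f.norm_apply_conj_sub_apply_conj_le (norm_le_one_of_mul_star_mul_self hu) hq.norm_le x
    rwa [hq.isSelfAdjoint.star_eq, hfω 1, hω1, norm_one, mul_one] at h
  calc _ ≤ (2 * √δ) ^ 2 := by gcongr
    _ = 4 * δ := by rw [mul_pow, Real.sq_sqrt hδ_nonneg]; norm_num
    _ = _ := by rw [hδ, sub_star_mul_self_mul_star_of_mul_star_mul_self hu]; simp [hfω]
end
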